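/- arXiv:0903.3647 — 3 statements merged into one kernel-verified Lean document; each statement's English description precedes it below -/
import Mathlib

section
/- Assume N ≥ 2. Let C ∈ ℂ^r have Euclidean norm 1, let Φ = (φ₁,…,φ_K) be an orthonormal system in L²(Ω), and set Ψ = π(C,Φ). Then for almost every (x,y,x',y') ∈ Ω⁴, binom(N,2) ∫_{Ω^{N−2}} Ψ(x,y,Z) conj(Ψ(x',y',Z)) dZ = Σ_{i,j,k,l=1}^K γ_ijkl(C) φ_i(x) φ_j(y) conj(φ_k(x')) conj(φ_l(y')). -/
open MeasureTheory Complex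
open scoped BigOperators ComplexConjugate ENNReal

noncomputable section

abbrev E3 : Type := EuclideanSpace ℝ (Fin 3)

def mOm (Ω : Set E3) : Measure E3 := MeasureTheory.volume.restrict Ω

def mN (Ω : Set E3) (n : ℕ) : Measure (Fin n → E3) := Measure.pi fun _ => mOm Ω

def ip2 (Ω : Set E3) (f g : E3 → ℂ) : ℂ := ∫ x, f x * conj (g x) ∂ (mOm Ω)

def ipN (Ω : Set E3) (n : ℕ) (f g : (Fin n → E3) → ℂ) : ℂ :=
  ∫ x, f x * conj (g x) ∂ (mN Ω n)

def slater (n : ℕ) (φ : Fin n → E3 → ℂ) : (Fin n → E3) → ℂ := fun x =>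
  ((Real.sqrt (Nat.factorial n) : ℂ))⁻¹ * Matrix.det (Matrix.of fun i j : Fin n => φ i (x j))

def SigmaNK (N K : ℕ) : Type := {s : Finset (Fin K) // s.card = N}

instance (N K : ℕ) : Fintype (SigmaNK N K) :=
  inferInstanceAs (Fintype {s : Finset (Fin K) // s.card = N})

instance (N K : ℕ) : DecidableEq (SigmaNK N K) :=
  inferInstanceAs (DecidableEq {s : Finset (Fin K) // s.card = N})

def embOf {N K : ℕ} (σ : SigmaNK N K) : Fin N → Fin K := fun i => σ.1.orderEmbOfFin σ.2 i

def slaterSel (N K : ℕ) (Φ : Fin K → E3 → ℂ) (σ : SigmaNK N K) : (Fin N → E3) → ℂ :=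
  slater N fun i => Φ (embOf σ i)

def mc (N K : ℕ) (C : SigmaNK N K → ℂ) (Φ : Fin K → E3 → ℂ) : (Fin N → E3) → ℂ :=
  fun x => ∑ σ : SigmaNK N K, C σ * slaterSel N K Φ σ x

def posIn {K : ℕ} (s : Finset (Fin K)) (i : Fin K) : ℕ :=
  (Finset.sort s (· ≤ ·)).idxOf i

def gamma1 (N K : ℕ) (C : SigmaNK N K → ℂ) (i j : Fin K) : ℂ :=
  ∑ σ : SigmaNK N K, ∑ τ : SigmaNK N K,
    if i ∈ σ.1 ∧ j ∈ τ.1 ∧ σ.1.erase i = τ.1.erase j then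
      (-1 : ℂ) ^ (posIn σ.1 i + posIn τ.1 j) * C σ * conj (C τ)
    else 0

def sgn2 {K : ℕ} (s : Finset (Fin K)) (i j : Fin K) : ℂ :=
  (if i = j then 0 else if j < i then 1 else -1) *
    (-1 : ℂ) ^ (posIn s i + posIn s j)

def gamma2 (N K : ℕ) (C : SigmaNK N K → ℂ) (i j k l : Fin K) : ℂ :=
  (1 / 2 : ℂ) * ∑ σ : SigmaNK N K, ∑ τ : SigmaNK N K,
    if i ∈ σ.1 ∧ j ∈ σ.1 ∧ k ∈ τ.1 ∧ l ∈ τ.1 ∧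
        (σ.1.erase i).erase j = (τ.1.erase k).erase l then
      sgn2 σ.1 i j * sgn2 τ.1 k l * C σ * conj (C τ)
    else 0

def GammaM (N K : ℕ) (C : SigmaNK N K → ℂ) : Matrix (Fin K) (Fin K) ℂ :=
  Matrix.of fun i j => conj (gamma1 N K C i j)

def OrthoSys (Ω : Set E3) {K : ℕ} (Φ : Fin K → E3 → ℂ) : Prop :=
  (∀ k, MemLp (Φ k) 2 (mOm Ω)) ∧
  ∀ i j, ip2 Ω (Φ i) (Φ j) = if i = j then 1 else 0

def dPhi (Ω : Set E3) (n : ℕ) (Ξ : (Fin n → E3) → ℂ) (φ ζ : E3 → ℂ) :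
    (Fin n → E3) → ℂ := fun x =>
  ∑ i : Fin n, ζ (x i) * ∫ y, Ξ (Function.update x i y) * conj (φ y) ∂ (mOm Ω)

def gammaFun (Ω : Set E3) (N : ℕ) (Ψ : (Fin (N+1) → E3) → ℂ) (f : E3 → ℂ) : E3 → ℂ :=
  fun x => ((N : ℂ) + 1) *
    ∫ y, (∫ Z, Ψ (Fin.cons x Z) * conj (Ψ (Fin.cons y Z)) ∂ (mN Ω N)) * f y ∂ (mOm Ω)

/-! Expanding a Slater determinant of `N + 2` orbitals along its first two columns gives
`Φ_σ(x, y, Z) = ((N + 2)(N + 1))^(-1/2) Σ ± φ_i(x) φ_j(y) Φ_{σ ∖ {i, j}}(Z)`.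
Slater determinants built from an orthonormal system are orthonormal in `L²(Ω^N)`, so
integrating out `Z` keeps exactly the terms with `σ ∖ {i, j} = τ ∖ {k, l}`, and
`binom(N + 2, 2) / ((N + 2)(N + 1)) = 1 / 2`. -/

open Equiv
open scoped Nat

section Integrals
variable {X : Type*} [MeasurableSpace X] {μ : Measure X}

theorem sum_mul_conj_sum {α β : Type*} [Fintype α] [Fintype β]
    (c u : α → ℂ) (d v : β → ℂ) :
    (∑ a, c a * u a) * conj (∑ b, d b * v b)
      = ∑ a, ∑ b, c a * conj (d b) * (u a * conj (v b)) := by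
  simp only [map_sum, map_mul, Finset.sum_mul_sum]
  exact Finset.sum_congr rfl fun _ _ => Finset.sum_congr rfl fun _ _ => by ring

variable {α β : Type*} [Fintype α] [Fintype β] (c : α → ℂ) (d : β → ℂ) {f : α → X → ℂ}
  {g : β → X → ℂ}

theorem integrable_sum_mul_conj_sum
    (hfg : ∀ a b, Integrable (fun x => f a x * conj (g b x)) μ) :
    Integrable (fun x => (∑ a, c a * f a x) * conj (∑ b, d b * g b x)) μ := by
  simp_rw [sum_mul_conj_sum]
  exact integrable_finsetSum _ fun a _ => integrable_finsetSum _ fun b _ =>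
    (hfg a b).const_mul _

theorem integral_sum_mul_conj_sum
    (hfg : ∀ a b, Integrable (fun x => f a x * conj (g b x)) μ) :
    ∫ x, (∑ a, c a * f a x) * conj (∑ b, d b * g b x) ∂μ
      = ∑ a, ∑ b, c a * conj (d b) * ∫ x, f a x * conj (g b x) ∂μ := by
  simp_rw [sum_mul_conj_sum]
  rw [integral_finsetSum _ fun a _ => integrable_finsetSum _ fun b _ => (hfg a b).const_mul _]
  refine Finset.sum_congr rfl fun a _ => ?_
  rw [integral_finsetSum _ fun b _ => (hfg a b).const_mul _]
  simp_rw [integral_const_mul]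

theorem MemLp.integrable_mul_conj {f g : X → ℂ} (hf : MemLp f 2 μ) (hg : MemLp g 2 μ) :
    Integrable (fun x => f x * conj (g x)) μ :=
  hf.integrable_mul hg.star

end Integrals

section SlaterDeterminants
variable {X ι : Type*} [MeasurableSpace X] {μ : Measure X} [SigmaFinite μ] {n : ℕ}

theorem det_mul_conj_det_eq_sum_perm (A B : Matrix (Fin n) (Fin n) ℂ) :
    A.det * conj B.det = ∑ π : Perm (Fin n), ∑ ρ : Perm (Fin n),
      ((Perm.sign π : ℤ) : ℂ) * ((Perm.sign ρ : ℤ) : ℂ) * ∏ j, (A (π j) j * conj (B (ρ j) j)) := by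
  rw [Matrix.det_apply', Matrix.det_apply', map_sum, Finset.sum_mul_sum]
  refine Finset.sum_congr rfl fun π _ => Finset.sum_congr rfl fun ρ _ => ?_
  rw [map_mul, map_prod, map_intCast, Finset.prod_mul_distrib]
  ring

variable {Φ : ι → X → ℂ}

theorem integrable_prod_mul_conj
    (hΦ : ∀ i j, Integrable (fun x => Φ i x * conj (Φ j x)) μ) (a b : Fin n → ι) :
    Integrable (fun Z : Fin n → X => ∏ j, (Φ (a j) (Z j) * conj (Φ (b j) (Z j))))
      (Measure.pi fun _ => μ) :=
  Integrable.fintype_prod (f := fun j x => Φ (a j) x * conj (Φ (b j) x)) fun _ => hΦ _ _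

theorem integrable_det_mul_conj_det
    (hΦ : ∀ i j, Integrable (fun x => Φ i x * conj (Φ j x)) μ) (a b : Fin n → ι) :
    Integrable (fun Z : Fin n → X => (Matrix.of fun i j => Φ (a i) (Z j)).det *
      conj (Matrix.of fun i j => Φ (b i) (Z j)).det) (Measure.pi fun _ => μ) := by
  simp_rw [det_mul_conj_det_eq_sum_perm, Matrix.of_apply]
  exact integrable_finsetSum _ fun π _ => integrable_finsetSum _ fun ρ _ =>
    (integrable_prod_mul_conj hΦ _ _).const_mul _

theorem StrictMono.comp_perm_eq_comp_perm_iff [LinearOrder ι] {a b : Fin n → ι}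
    (ha : StrictMono a) (hb : StrictMono b) (π ρ : Perm (Fin n)) :
    a ∘ π = b ∘ ρ ↔ a = b ∧ π = ρ := by
  refine ⟨fun h => ?_, fun ⟨hab, hπρ⟩ => hab ▸ hπρ ▸ rfl⟩
  have hab : a = b := by
    rw [← ha.range_inj hb, ← π.surjective.range_comp a, h, ρ.surjective.range_comp]
  subst hab
  exact ⟨rfl, Equiv.ext fun j => ha.injective (congrFun h j)⟩

theorem integral_det_mul_conj_det [LinearOrder ι]
    (hΦ : ∀ i j, Integrable (fun x => Φ i x * conj (Φ j x)) μ)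
    (horth : ∀ i j, ∫ x, Φ i x * conj (Φ j x) ∂μ = if i = j then 1 else 0)
    {a b : Fin n → ι} (ha : StrictMono a) (hb : StrictMono b) :
    ∫ Z, (Matrix.of fun i j => Φ (a i) (Z j)).det *
        conj (Matrix.of fun i j => Φ (b i) (Z j)).det ∂(Measure.pi fun _ => μ)
      = if a = b then (n ! : ℂ) else 0 := by
  have hterm : ∀ π ρ : Perm (Fin n),
      ∫ Z, ∏ j, (Φ (a (π j)) (Z j) * conj (Φ (b (ρ j)) (Z j))) ∂(Measure.pi fun _ => μ)
        = if a = b ∧ π = ρ then 1 else 0 := fun π ρ => by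
    rw [integral_fintype_prod_eq_prod (fun j x => Φ (a (π j)) x * conj (Φ (b (ρ j)) x))]
    simp only [horth, Fintype.prod_boole]
    congr 1
    exact propext (funext_iff.symm.trans (ha.comp_perm_eq_comp_perm_iff hb π ρ))
  simp_rw [det_mul_conj_det_eq_sum_perm, Matrix.of_apply]
  rw [integral_finsetSum _ fun π _ => integrable_finsetSum _ fun ρ _ =>
    (integrable_prod_mul_conj hΦ _ _).const_mul _]
  simp_rw [integral_finsetSum _ fun ρ _ => (integrable_prod_mul_conj hΦ _ _).const_mul _,
    integral_const_mul, hterm]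
  split_ifs with hab
  · have hsign : ∀ π : Perm (Fin n), ((Perm.sign π : ℤ) : ℂ) * ((Perm.sign π : ℤ) : ℂ) = 1 :=
      fun π => by rw [← Int.cast_mul, Int.units_coe_mul_self, Int.cast_one]
    subst hab
    simp [hsign, Fintype.card_perm]
  · simp [hab]

end SlaterDeterminants

instance (Ω : Set E3) : SigmaFinite (mOm Ω) :=
  inferInstanceAs (SigmaFinite (volume.restrict Ω))

theorem OrthoSys.integrable_mul_conj {Ω : Set E3} {K : ℕ} {Φ : Fin K → E3 → ℂ}
    (hΦ : OrthoSys Ω Φ) (i j : Fin K) : Integrable (fun x => Φ i x * conj (Φ j x)) (mOm Ω) :=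
  MemLp.integrable_mul_conj (hΦ.1 i) (hΦ.1 j)

section SigmaNK
variable {n K : ℕ}

theorem embOf_strictMono (σ : SigmaNK n K) : StrictMono (embOf σ) :=
  (σ.1.orderEmbOfFin σ.2).strictMono

theorem embOf_mem (σ : SigmaNK n K) (m : Fin n) : embOf σ m ∈ σ.1 :=
  Finset.orderEmbOfFin_mem _ _ _

theorem range_embOf (σ : SigmaNK n K) : Set.range (embOf σ) = σ.1 :=
  Finset.range_orderEmbOfFin _ _

theorem embOf_injective : Function.Injective (embOf : SigmaNK n K → Fin n → Fin K) :=
  fun σ τ h => Subtype.ext <| Finset.coe_injective <| by rw [← range_embOf, ← range_embOf, h]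

theorem posIn_embOf (σ : SigmaNK n K) (m : Fin n) : posIn σ.1 (embOf σ m) = m := by
  unfold posIn embOf
  rw [Finset.orderEmbOfFin_apply]
  exact (Finset.sort_nodup ..).idxOf_getElem _ _

end SigmaNK

section SlaterOrthonormality
variable {Ω : Set E3} {n K : ℕ} {Φ : Fin K → E3 → ℂ}

theorem slaterSel_mul_conj (σ τ : SigmaNK n K) (Z W : Fin n → E3) :
    slaterSel n K Φ σ Z * conj (slaterSel n K Φ τ W)
      = (n ! : ℂ)⁻¹ * ((Matrix.of fun i j => Φ (embOf σ i) (Z j)).det *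
          conj (Matrix.of fun i j => Φ (embOf τ i) (W j)).det) := by
  have hsqrt : ((√(n ! : ℝ) : ℂ))⁻¹ * ((√(n ! : ℝ) : ℂ))⁻¹ = (n ! : ℂ)⁻¹ := by
    rw [← mul_inv, ← Complex.ofReal_mul, Real.mul_self_sqrt (Nat.cast_nonneg _),
      Complex.ofReal_natCast]
  simp only [slaterSel, slater, map_mul, map_inv₀, Complex.conj_ofReal]
  rw [← hsqrt]
  ring

theorem integrable_slaterSel_mul_conj (hΦ : OrthoSys Ω Φ) (σ τ : SigmaNK n K) :
    Integrable (fun Z => slaterSel n K Φ σ Z * conj (slaterSel n K Φ τ Z)) (mN Ω n) := by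
  simp_rw [slaterSel_mul_conj]
  exact (integrable_det_mul_conj_det hΦ.integrable_mul_conj _ _).const_mul _

theorem ipN_slaterSel (hΦ : OrthoSys Ω Φ) (σ τ : SigmaNK n K) :
    ipN Ω n (slaterSel n K Φ σ) (slaterSel n K Φ τ) = if σ = τ then 1 else 0 := by
  simp_rw [ipN, slaterSel_mul_conj, integral_const_mul]
  rw [mN, integral_det_mul_conj_det hΦ.integrable_mul_conj hΦ.2 (embOf_strictMono σ)
    (embOf_strictMono τ)]
  simp only [embOf_injective.eq_iff]
  split_ifs
  · exact inv_mul_cancel₀ (Nat.cast_ne_zero.2 n.factorial_ne_zero)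
  · exact mul_zero _

end SlaterOrthonormality

theorem Matrix.det_eq_sum_column_zero_one {R : Type*} [CommRing R] {n : ℕ}
    (M : Matrix (Fin (n + 2)) (Fin (n + 2)) R) :
    M.det = ∑ p : Fin (n + 2) × Fin (n + 1),
      (-1) ^ ((p.1 : ℕ) + p.2) * (M p.1 0 * M (p.1.succAbove p.2) 1) *
        (M.submatrix (p.1.succAbove ∘ p.2.succAbove) (Fin.succ ∘ Fin.succ)).det := by
  rw [Fintype.sum_prod_type, Matrix.det_succ_column_zero]
  refine Finset.sum_congr rfl fun i _ => ?_
  rw [Matrix.det_succ_column_zero, Finset.mul_sum]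
  refine Finset.sum_congr rfl fun j _ => ?_
  simp only [Matrix.submatrix_apply, Matrix.submatrix_submatrix, Function.comp_def,
    Fin.succ_zero_eq_one, pow_add]
  ring

section PairSums
variable {n K : ℕ}

theorem embOf_succAbove_ne (σ : SigmaNK (n + 2) K) (p : Fin (n + 2) × Fin (n + 1)) :
    embOf σ (p.1.succAbove p.2) ≠ embOf σ p.1 :=
  (embOf_strictMono σ).injective.ne (Fin.succAbove_ne _ _)

def eraseTwo (σ : SigmaNK (n + 2) K) (p : Fin (n + 2) × Fin (n + 1)) : SigmaNK n K :=
  ⟨(σ.1.erase (embOf σ p.1)).erase (embOf σ (p.1.succAbove p.2)), by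
    rw [Finset.card_erase_of_mem (Finset.mem_erase.2 ⟨embOf_succAbove_ne σ p, embOf_mem _ _⟩),
      Finset.card_erase_of_mem (embOf_mem _ _), σ.2]
    rfl⟩

theorem eraseTwo_eq_eraseTwo_iff {σ τ : SigmaNK (n + 2) K} {p q : Fin (n + 2) × Fin (n + 1)} :
    eraseTwo σ p = eraseTwo τ q ↔ (σ.1.erase (embOf σ p.1)).erase (embOf σ (p.1.succAbove p.2))
      = (τ.1.erase (embOf τ q.1)).erase (embOf τ (q.1.succAbove q.2)) :=
  Subtype.ext_iff

theorem embOf_eraseTwo (σ : SigmaNK (n + 2) K) (p : Fin (n + 2) × Fin (n + 1)) :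
    embOf (eraseTwo σ p) = embOf σ ∘ p.1.succAbove ∘ p.2.succAbove := by
  have hmono : StrictMono (embOf σ ∘ p.1.succAbove ∘ p.2.succAbove) :=
    (embOf_strictMono σ).comp ((Fin.strictMono_succAbove _).comp (Fin.strictMono_succAbove _))
  have hmem : ∀ m, (embOf σ ∘ p.1.succAbove ∘ p.2.succAbove) m ∈ (eraseTwo σ p).1 := fun m =>
    Finset.mem_erase.2 ⟨(embOf_strictMono σ).injective.ne
        ((Fin.succAbove_right_injective).ne (Fin.succAbove_ne _ _)),
      Finset.mem_erase.2 ⟨(embOf_strictMono σ).injective.ne (Fin.succAbove_ne _ _),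
        embOf_mem _ _⟩⟩
  exact (Finset.orderEmbOfFin_unique _ hmem hmono).symm

theorem sgn2_embOf (σ : SigmaNK (n + 2) K) (p : Fin (n + 2) × Fin (n + 1)) :
    sgn2 σ.1 (embOf σ p.1) (embOf σ (p.1.succAbove p.2)) = (-1) ^ ((p.1 : ℕ) + p.2) := by
  obtain ⟨i, j⟩ := p
  unfold sgn2
  rw [posIn_embOf, posIn_embOf, if_neg (embOf_succAbove_ne σ (i, j)).symm]
  rcases lt_or_ge j.castSucc i with h | h
  · rw [Fin.succAbove_of_castSucc_lt _ _ h, if_pos (embOf_strictMono σ h), one_mul,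
      Fin.val_castSucc]
  · rw [Fin.succAbove_of_le_castSucc _ _ h,
      if_neg (embOf_strictMono σ (h.trans_lt j.castSucc_lt_succ)).not_gt, Fin.val_succ,
      ← add_assoc, pow_succ]
    ring

def pairSign (s : Finset (Fin K)) (i j : Fin K) : ℂ :=
  if i ∈ s ∧ j ∈ s then sgn2 s i j else 0

theorem exists_embOf_pair (σ : SigmaNK (n + 2) K) {i j : Fin K} (hi : i ∈ σ.1) (hj : j ∈ σ.1)
    (hij : i ≠ j) :
    ∃ p : Fin (n + 2) × Fin (n + 1), embOf σ p.1 = i ∧ embOf σ (p.1.succAbove p.2) = j := by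
  obtain ⟨a, rfl⟩ : i ∈ Set.range (embOf σ) := (range_embOf σ).symm ▸ hi
  obtain ⟨b, rfl⟩ : j ∈ Set.range (embOf σ) := (range_embOf σ).symm ▸ hj
  obtain ⟨c, rfl⟩ := Fin.exists_succAbove_eq (ne_of_apply_ne (embOf σ) hij).symm
  exact ⟨(a, c), rfl, rfl⟩

theorem sum_pairs_embOf (σ : SigmaNK (n + 2) K) (F : Fin K → Fin K → ℂ) :
    ∑ p : Fin (n + 2) × Fin (n + 1),
        (-1) ^ ((p.1 : ℕ) + p.2) * F (embOf σ p.1) (embOf σ (p.1.succAbove p.2))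
      = ∑ i, ∑ j, pairSign σ.1 i j * F i j := by
  rw [← Fintype.sum_prod_type']
  refine Finset.sum_of_injOn (fun p => (embOf σ p.1, embOf σ (p.1.succAbove p.2)))
    ?_ (fun _ _ => Finset.mem_univ _) ?_ ?_
  · rintro ⟨a, b⟩ - ⟨c, d⟩ - h
    obtain ⟨hac, hbd⟩ := Prod.mk.inj h
    obtain rfl : a = c := (embOf_strictMono σ).injective hac
    obtain rfl : b = d := Fin.succAbove_right_injective ((embOf_strictMono σ).injective hbd)
    rfl
  · rintro ⟨i, j⟩ - hnot
    by_cases hmem : i ∈ σ.1 ∧ j ∈ σ.1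
    · obtain rfl | hij := eq_or_ne i j
      · simp [pairSign, sgn2] -- `sgn2 s i i = 0`
      · obtain ⟨p, hp⟩ := exists_embOf_pair σ hmem.1 hmem.2 hij
        exact absurd ⟨p, Finset.mem_coe.2 (Finset.mem_univ _), Prod.ext hp.1 hp.2⟩ hnot
    · simp [pairSign, hmem]
  · intro p _
    simp only [pairSign, if_pos (And.intro (embOf_mem σ _) (embOf_mem σ _)), sgn2_embOf]

def pairCoeff (s t : Finset (Fin K)) (i j k l : Fin K) : ℂ :=
  pairSign s i j * pairSign t k l * if (s.erase i).erase j = (t.erase k).erase l then 1 else 0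

theorem sum_sum_eraseTwo (σ τ : SigmaNK (n + 2) K) (f g : Fin K → Fin K → ℂ) :
    ∑ p : Fin (n + 2) × Fin (n + 1), ∑ q : Fin (n + 2) × Fin (n + 1),
        (-1) ^ ((p.1 : ℕ) + p.2) * f (embOf σ p.1) (embOf σ (p.1.succAbove p.2)) *
          conj ((-1) ^ ((q.1 : ℕ) + q.2) * g (embOf τ q.1) (embOf τ (q.1.succAbove q.2))) *
          (if eraseTwo σ p = eraseTwo τ q then 1 else 0)
      = ∑ i, ∑ j, ∑ k, ∑ l, pairCoeff σ.1 τ.1 i j k l * (f i j * conj (g k l)) := by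
  calc _ = ∑ p : Fin (n + 2) × Fin (n + 1), (-1) ^ ((p.1 : ℕ) + p.2) *
          (f (embOf σ p.1) (embOf σ (p.1.succAbove p.2)) *
            ∑ q : Fin (n + 2) × Fin (n + 1), (-1) ^ ((q.1 : ℕ) + q.2) *
              (conj (g (embOf τ q.1) (embOf τ (q.1.succAbove q.2))) *
                if (σ.1.erase (embOf σ p.1)).erase (embOf σ (p.1.succAbove p.2))
                    = (τ.1.erase (embOf τ q.1)).erase (embOf τ (q.1.succAbove q.2))
                  then 1 else 0)) := by
        refine Finset.sum_congr rfl fun p _ => ?_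
        simp only [Finset.mul_sum, eraseTwo_eq_eraseTwo_iff, map_mul, map_pow, map_neg, map_one]
        refine Finset.sum_congr rfl fun q _ => ?_
        ring
    _ = ∑ p : Fin (n + 2) × Fin (n + 1), (-1) ^ ((p.1 : ℕ) + p.2) *
          (f (embOf σ p.1) (embOf σ (p.1.succAbove p.2)) *
            ∑ k, ∑ l, pairSign τ.1 k l * (conj (g k l) *
              if (σ.1.erase (embOf σ p.1)).erase (embOf σ (p.1.succAbove p.2))
                  = (τ.1.erase k).erase l then 1 else 0)) := by
        refine Finset.sum_congr rfl fun p _ => ?_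
        congr 2
        exact sum_pairs_embOf τ fun k l => conj (g k l) *
          if (σ.1.erase (embOf σ p.1)).erase (embOf σ (p.1.succAbove p.2))
              = (τ.1.erase k).erase l then 1 else 0
    _ = ∑ i, ∑ j, pairSign σ.1 i j * (f i j *
          ∑ k, ∑ l, pairSign τ.1 k l * (conj (g k l) *
            if (σ.1.erase i).erase j = (τ.1.erase k).erase l then 1 else 0)) :=
        sum_pairs_embOf σ fun i j => f i j *
          ∑ k, ∑ l, pairSign τ.1 k l * (conj (g k l) *
            if (σ.1.erase i).erase j = (τ.1.erase k).erase l then 1 else 0)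
    _ = _ := by
        simp only [Finset.mul_sum, pairCoeff]
        refine Finset.sum_congr rfl fun i _ => Finset.sum_congr rfl fun j _ =>
          Finset.sum_congr rfl fun k _ => Finset.sum_congr rfl fun l _ => ?_
        ring

end PairSums

theorem gamma2_eq_sum_pairCoeff (N K : ℕ) (C : SigmaNK N K → ℂ) (i j k l : Fin K) :
    gamma2 N K C i j k l
      = 1 / 2 * ∑ σ : SigmaNK N K, ∑ τ : SigmaNK N K,
          pairCoeff σ.1 τ.1 i j k l * (C σ * conj (C τ)) := by
  unfold gamma2
  congr 1
  refine Finset.sum_congr rfl fun σ _ => Finset.sum_congr rfl fun τ _ => ?_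
  unfold pairCoeff pairSign
  split_ifs <;> first | ring1 | (exfalso; tauto)

theorem choose_two_mul_inv_mul_succ (n : ℕ) :
    ((n + 2).choose 2 : ℂ) * ((n + 2) * (n + 1) : ℂ)⁻¹ = 1 / 2 := by
  have h2 : (n + 2 : ℂ) ≠ 0 := by norm_cast
  have h1 : (n + 1 : ℂ) ≠ 0 := by norm_cast
  rw [Nat.cast_choose_two]
  push_cast
  rw [show (n : ℂ) + 2 - 1 = n + 1 by ring]
  field_simp

section TwoParticleExpansion
variable {Ω : Set E3} {n K : ℕ} {Φ : Fin K → E3 → ℂ}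

theorem slaterSel_cons_cons (σ : SigmaNK (n + 2) K) (x y : E3) (Z : Fin n → E3) :
    slaterSel (n + 2) K Φ σ (Fin.cons x (Fin.cons y Z))
      = ((√((n + 2) * (n + 1) : ℝ) : ℂ))⁻¹ * ∑ p : Fin (n + 2) × Fin (n + 1),
          (-1) ^ ((p.1 : ℕ) + p.2) * (Φ (embOf σ p.1) x * Φ (embOf σ (p.1.succAbove p.2)) y) *
            slaterSel n K Φ (eraseTwo σ p) Z := by
  have hnorm : ((√((n + 2) ! : ℝ) : ℂ))⁻¹
      = ((√((n + 2) * (n + 1) : ℝ) : ℂ))⁻¹ * ((√(n ! : ℝ) : ℂ))⁻¹ := by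
    rw [← mul_inv, ← Complex.ofReal_mul, ← Real.sqrt_mul (by positivity), Nat.factorial_succ,
      Nat.factorial_succ]
    push_cast
    ring_nf
  simp only [slaterSel, slater, embOf_eraseTwo]
  rw [Matrix.det_eq_sum_column_zero_one, hnorm, mul_assoc, Finset.mul_sum]
  congr 1
  refine Finset.sum_congr rfl fun p _ => ?_
  simp only [Matrix.submatrix, Matrix.of_apply, Function.comp_apply, Fin.cons_zero, Fin.cons_one,
    Fin.cons_succ]
  ring

theorem integrable_slaterSel_cons_cons_mul_conj (hΦ : OrthoSys Ω Φ) (σ τ : SigmaNK (n + 2) K)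
    (x y x' y' : E3) :
    Integrable (fun Z => slaterSel (n + 2) K Φ σ (Fin.cons x (Fin.cons y Z)) *
      conj (slaterSel (n + 2) K Φ τ (Fin.cons x' (Fin.cons y' Z)))) (mN Ω n) := by
  simp_rw [slaterSel_cons_cons, map_mul]
  conv => enter [1, Z]; rw [mul_mul_mul_comm]
  exact (integrable_sum_mul_conj_sum _ _ fun p q =>
    integrable_slaterSel_mul_conj hΦ _ _).const_mul _

theorem integral_slaterSel_cons_cons_mul_conj (hΦ : OrthoSys Ω Φ) (σ τ : SigmaNK (n + 2) K)
    (x y x' y' : E3) :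
    ∫ Z, slaterSel (n + 2) K Φ σ (Fin.cons x (Fin.cons y Z)) *
        conj (slaterSel (n + 2) K Φ τ (Fin.cons x' (Fin.cons y' Z))) ∂(mN Ω n)
      = ((n + 2) * (n + 1) : ℂ)⁻¹ * ∑ i, ∑ j, ∑ k, ∑ l,
          pairCoeff σ.1 τ.1 i j k l * (Φ i x * Φ j y * conj (Φ k x') * conj (Φ l y')) := by
  have hc : ((√((n + 2) * (n + 1) : ℝ) : ℂ))⁻¹ * conj ((√((n + 2) * (n + 1) : ℝ) : ℂ))⁻¹
      = ((n + 2) * (n + 1) : ℂ)⁻¹ := by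
    rw [map_inv₀, Complex.conj_ofReal, ← mul_inv, ← Complex.ofReal_mul,
      Real.mul_self_sqrt (by positivity)]
    push_cast
    rfl
  simp_rw [slaterSel_cons_cons, map_mul]
  conv_lhs => enter [2, Z]; rw [mul_mul_mul_comm, hc]
  rw [integral_const_mul,
    integral_sum_mul_conj_sum _ _ fun p q => integrable_slaterSel_mul_conj hΦ _ _]
  have hip : ∀ p q, ∫ Z, slaterSel n K Φ (eraseTwo σ p) Z *
      conj (slaterSel n K Φ (eraseTwo τ q) Z) ∂(mN Ω n)
        = if eraseTwo σ p = eraseTwo τ q then 1 else 0 :=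
    fun p q => ipN_slaterSel hΦ _ _
  simp_rw [hip]
  congr 1
  refine (sum_sum_eraseTwo σ τ (fun i j => Φ i x * Φ j y) (fun k l => Φ k x' * Φ l y')).trans ?_
  simp only [map_mul, mul_assoc]

end TwoParticleExpansion

theorem second_order_density_kernel_general (Ω : Set E3) (N K : ℕ)
    (C : SigmaNK (N+2) K → ℂ)
    (Φ : Fin K → E3 → ℂ) (hΦ : OrthoSys Ω Φ) :
    (fun p : (E3 × E3) × (E3 × E3) =>
        ((Nat.choose (N+2) 2 : ℕ) : ℂ) *
          ∫ Z, mc (N+2) K C Φ (Fin.cons p.1.1 (Fin.cons p.1.2 Z)) *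
              conj (mc (N+2) K C Φ (Fin.cons p.2.1 (Fin.cons p.2.2 Z)))
            ∂ (mN Ω N))
      =ᵐ[((mOm Ω).prod (mOm Ω)).prod ((mOm Ω).prod (mOm Ω))]
      fun p : (E3 × E3) × (E3 × E3) =>
        ∑ i : Fin K, ∑ j : Fin K, ∑ k : Fin K, ∑ l : Fin K,
          gamma2 (N+2) K C i j k l * Φ i p.1.1 * Φ j p.1.2 *
            conj (Φ k p.2.1) * conj (Φ l p.2.2) := by
  refine Filter.Eventually.of_forall fun ⟨⟨x, y⟩, x', y'⟩ => ?_
  simp only [mc]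
  rw [integral_sum_mul_conj_sum _ _ fun σ τ =>
    integrable_slaterSel_cons_cons_mul_conj hΦ σ τ x y x' y']
  simp_rw [integral_slaterSel_cons_cons_mul_conj hΦ, gamma2_eq_sum_pairCoeff,
    ← choose_two_mul_inv_mul_succ N, Finset.mul_sum, Finset.sum_mul]
  simp only [Finset.sum_comm (s := (Finset.univ : Finset (SigmaNK (N + 2) K)))
    (t := (Finset.univ : Finset (Fin K)))]
  refine Finset.sum_congr rfl fun i _ => Finset.sum_congr rfl fun j _ =>
    Finset.sum_congr rfl fun k _ => Finset.sum_congr rfl fun l _ =>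
    Finset.sum_congr rfl fun σ _ => Finset.sum_congr rfl fun τ _ => ?_
  ring

/-- the kernel of the second-order density matrix of Ψ = π(C,Φ)
(with N+2 particles, so the particle number is ≥ 2) equals
Σ_{i,j,k,l} γ_ijkl(C) φ_i(x) φ_j(y) conj(φ_k(x')) conj(φ_l(y')) for a.e. (x,y,x',y') ∈ Ω⁴. -/
theorem second_order_density_kernel (Ω : Set E3) (hΩ : IsOpen Ω) (N K : ℕ)
    (hNK : N + 2 ≤ K)
    (C : SigmaNK (N+2) K → ℂ) (hC : ∑ σ : SigmaNK (N+2) K, ‖C σ‖ ^ 2 = 1)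
    (Φ : Fin K → E3 → ℂ) (hΦ : OrthoSys Ω Φ) :
    (fun p : (E3 × E3) × (E3 × E3) =>
        ((Nat.choose (N+2) 2 : ℕ) : ℂ) *
          ∫ Z, mc (N+2) K C Φ (Fin.cons p.1.1 (Fin.cons p.1.2 Z)) *
              conj (mc (N+2) K C Φ (Fin.cons p.2.1 (Fin.cons p.2.2 Z)))
            ∂ (mN Ω N))
      =ᵐ[((mOm Ω).prod (mOm Ω)).prod ((mOm Ω).prod (mOm Ω))]
      fun p : (E3 × E3) × (E3 × E3) =>
        ∑ i : Fin K, ∑ j : Fin K, ∑ k : Fin K, ∑ l : Fin K,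
          gamma2 (N+2) K C i j k l * Φ i p.1.1 * Φ j p.1.2 *
            conj (Φ k p.2.1) * conj (Φ l p.2.2) :=
  second_order_density_kernel_general Ω N K C Φ hΦ
end
end

section
/- For every C ∈ ℂ^r with Euclidean norm 1, the K×K matrix Γ(C) is Hermitian; its diagonal entries satisfy Γ(C)_{ii} = Σ_{σ∈Σ_{N,K}, i∈σ} |c_σ|² (in particular 0 ≤ Γ(C)_{ii} ≤ 1); its trace equals N; and both Γ(C) and I − Γ(C) are positive semidefinite. -/
open MeasureTheory Complex
open scoped BigOperators ComplexConjugate ENNReal ComplexOrder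

noncomputable section

/-!
View `C` as the vector `∑ c_s e_s` of the exterior algebra over `ℂ^K`, with `e_s` the wedge
product of the basis vectors indexed by `s` in increasing order, and let `a_i` be the
annihilation operators. With `A` the matrix whose `i`-th column is `a_i C`, one has
`Γ(C) = AᴴA`, which is positive semidefinite. With `B` the matrix whose `i`-th column is the
conjugate of `a_i* C`, the anticommutation relations `a_i* a_j + a_j a_i* = δᵢⱼ` read
`AᴴA + BᴴB = ‖C‖² • 1`, so `1 - Γ(C) = BᴴB` is positive semidefinite too. The diagonal and the
trace are direct counts.
-/

open Finset
open scoped Matrix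

section Reindex

variable {α M : Type*} [Fintype α] [DecidableEq α] [AddCommMonoid M]

theorem sum_ite_subset_eq_sum_ite_disjoint (t : Finset α) (f : Finset α → M) :
    ∑ μ, (if t ⊆ μ then f μ else 0) = ∑ ρ, if Disjoint t ρ then f (t ∪ ρ) else 0 := by
  rw [← sum_filter, ← sum_filter]
  refine sum_nbij' (· \ t) (t ∪ ·) ?_ ?_ ?_ ?_ ?_
  · intro μ _
    simpa using disjoint_sdiff
  · intro ρ _
    simp
  · intro μ hμ
    exact union_sdiff_of_subset (mem_filter.1 hμ).2
  · intro ρ hρ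
    exact union_sdiff_cancel_left (mem_filter.1 hρ).2
  · intro μ hμ
    rw [union_sdiff_of_subset (mem_filter.1 hμ).2]

theorem sum_ite_mem_eq_sum_ite_notMem_insert (i : α) (f : Finset α → M) :
    ∑ s, (if i ∈ s then f s else 0) = ∑ ρ, if i ∉ ρ then f (insert i ρ) else 0 := by
  simpa using sum_ite_subset_eq_sum_ite_disjoint {i} f

theorem sum_ite_pair_mem_eq_sum_ite_notMem_insert_insert (i j : α) (f : Finset α → M) :
    ∑ μ, (if i ∈ μ ∧ j ∈ μ then f μ else 0) =
      ∑ ρ, if i ∉ ρ ∧ j ∉ ρ then f (insert i (insert j ρ)) else 0 := by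
  simpa [insert_subset_iff, insert_union] using sum_ite_subset_eq_sum_ite_disjoint {i, j} f

theorem sum_sum_ite_erase_eq_erase (i j : α) (f : Finset α → Finset α → M) :
    ∑ s, ∑ t, (if i ∈ s ∧ j ∈ t ∧ s.erase i = t.erase j then f s t else 0) =
      ∑ ρ, if i ∉ ρ ∧ j ∉ ρ then f (insert i ρ) (insert j ρ) else 0 := by
  rw [← Fintype.sum_prod_type', ← sum_filter, ← sum_filter]
  have hinsert : ∀ p : Finset α × Finset α, i ∈ p.1 ∧ j ∈ p.2 ∧ p.1.erase i = p.2.erase j →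
      (insert i (p.1.erase i), insert j (p.1.erase i)) = p := by
    rintro ⟨s, t⟩ ⟨hi, hj, hst⟩
    dsimp only at hi hj hst ⊢
    rw [hst, insert_erase hj, ← hst, insert_erase hi]
  refine sum_nbij' (fun p => p.1.erase i) (fun ρ => (insert i ρ, insert j ρ)) ?_ ?_ ?_ ?_ ?_
  · rintro ⟨s, t⟩ h
    obtain ⟨-, -, hst⟩ := (mem_filter.1 h).2
    exact mem_filter.2 ⟨mem_univ _, notMem_erase i s, hst ▸ notMem_erase j t⟩
  · intro ρ h
    obtain ⟨hi, hj⟩ := (mem_filter.1 h).2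
    simp [erase_insert hi, erase_insert hj]
  · intro p h
    exact hinsert p (mem_filter.1 h).2
  · intro ρ h
    exact erase_insert (mem_filter.1 h).2.1
  · intro p h
    exact congrArg (fun q => f q.1 q.2) (hinsert p (mem_filter.1 h).2).symm

end Reindex

section PosIn

variable {K : ℕ} {s ρ : Finset (Fin K)} {i j : Fin K}

theorem posIn_eq_card_filter_lt (hi : i ∈ s) : posIn s i = #{k ∈ s | k < i} := by
  set e := s.orderIsoOfFin rfl
  rw [posIn, ← s.orderIsoOfFin_symm_apply rfl ⟨i, hi⟩, ← Fin.card_Iio]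
  refine card_bij (fun m _ => (e m : Fin K)) ?_ ?_ ?_
  · intro m hm
    rw [mem_Iio, ← e.lt_iff_lt, OrderIso.apply_symm_apply] at hm
    exact mem_filter.2 ⟨(e m).2, hm⟩
  · intro a _ b _ h
    exact e.injective (Subtype.ext h)
  · intro k hk
    obtain ⟨hks, hki⟩ := mem_filter.1 hk
    exact ⟨e.symm ⟨k, hks⟩, mem_Iio.2 (e.symm.lt_iff_lt.2 hki), by simp⟩

theorem posIn_insert_insert_add (hij : i ≠ j) (hi : i ∉ ρ) (hj : j ∉ ρ) :
    posIn (insert i (insert j ρ)) i + posIn (insert i (insert j ρ)) j =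
      posIn (insert i ρ) i + posIn (insert j ρ) j + 1 := by
  simp only [posIn_eq_card_filter_lt (by simp : i ∈ insert i (insert j ρ)),
    posIn_eq_card_filter_lt (by simp : j ∈ insert i (insert j ρ)),
    posIn_eq_card_filter_lt (mem_insert_self i ρ), posIn_eq_card_filter_lt (mem_insert_self j ρ),
    filter_insert, lt_irrefl, if_false]
  rcases hij.lt_or_gt with h | h
  · simp [h, h.not_gt, card_insert_of_notMem, hi]
    omega
  · simp [h, h.not_gt, card_insert_of_notMem, hj]
    omega

end PosIn

section FockMatrices

variable {K : ℕ}

/- Rows are indexed by all finsets `ρ`, standing for `e_ρ`; `(-1) ^ posIn s i` is the sign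
picked up by moving `e_i` to the front of `e_s`. -/
def annihilationMatrix (c : Finset (Fin K) → ℂ) : Matrix (Finset (Fin K)) (Fin K) ℂ :=
  Matrix.of fun ρ i => if i ∉ ρ then (-1) ^ posIn (insert i ρ) i * c (insert i ρ) else 0

def creationMatrix (c : Finset (Fin K) → ℂ) : Matrix (Finset (Fin K)) (Fin K) ℂ :=
  Matrix.of fun μ i => if i ∈ μ then (-1) ^ posIn μ i * conj (c (μ.erase i)) else 0

variable (c : Finset (Fin K) → ℂ)

theorem star_neg_one_pow_mul_mul_neg_one_pow_mul (n : ℕ) (z w : ℂ) :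
    star ((-1) ^ n * z) * ((-1) ^ n * w) = conj z * w := by
  simp only [RCLike.star_def, map_mul, map_pow, map_neg, map_one]
  rw [mul_mul_mul_comm, ← mul_pow, neg_mul_neg, one_mul, one_pow, one_mul]

theorem conjTranspose_annihilationMatrix_mul_self_apply_self (i : Fin K) :
    ((annihilationMatrix c)ᴴ * annihilationMatrix c) i i =
      ((∑ s, if i ∈ s then ‖c s‖ ^ 2 else 0 : ℝ) : ℂ) := by
  rw [Matrix.mul_apply, sum_ite_mem_eq_sum_ite_notMem_insert, ofReal_sum]
  refine sum_congr rfl fun ρ _ => ?_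
  by_cases h : i ∈ ρ
  · simp [annihilationMatrix, h]
  · simp only [annihilationMatrix, Matrix.conjTranspose_apply, Matrix.of_apply, if_pos h,
      star_neg_one_pow_mul_mul_neg_one_pow_mul, conj_mul', ofReal_pow]

theorem conjTranspose_creationMatrix_mul_self_apply_self (i : Fin K) :
    ((creationMatrix c)ᴴ * creationMatrix c) i i =
      ((∑ s, if i ∉ s then ‖c s‖ ^ 2 else 0 : ℝ) : ℂ) := by
  rw [Matrix.mul_apply, ofReal_sum]
  trans ∑ μ : Finset (Fin K), if i ∈ μ then ((‖c (μ.erase i)‖ ^ 2 : ℝ) : ℂ) else 0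
  · refine sum_congr rfl fun μ _ => ?_
    by_cases h : i ∈ μ
    · simp only [creationMatrix, Matrix.conjTranspose_apply, Matrix.of_apply, if_pos h,
        star_neg_one_pow_mul_mul_neg_one_pow_mul, conj_conj, mul_conj', ofReal_pow]
    · simp [creationMatrix, h]
  · rw [sum_ite_mem_eq_sum_ite_notMem_insert]
    refine sum_congr rfl fun ρ _ => ?_
    by_cases h : i ∈ ρ
    · simp [h]
    · simp [h, erase_insert h]

theorem conjTranspose_annihilationMatrix_mul_self_add_creationMatrix_apply_of_ne {i j : Fin K}
    (hij : i ≠ j) :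
    ((annihilationMatrix c)ᴴ * annihilationMatrix c +
      (creationMatrix c)ᴴ * creationMatrix c) i j = 0 := by
  have hA : ∀ ρ, star (annihilationMatrix c ρ i) * annihilationMatrix c ρ j =
      if i ∉ ρ ∧ j ∉ ρ then (-1) ^ (posIn (insert i ρ) i + posIn (insert j ρ) j) *
        (conj (c (insert i ρ)) * c (insert j ρ)) else 0 := by
    intro ρ
    by_cases hi : i ∈ ρ <;> by_cases hj : j ∈ ρ <;> simp [annihilationMatrix, hi, hj, pow_add]
    ring
  have hW : ∀ μ, star (creationMatrix c μ i) * creationMatrix c μ j =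
      if i ∈ μ ∧ j ∈ μ then (-1) ^ (posIn μ i + posIn μ j) *
        (c (μ.erase i) * conj (c (μ.erase j))) else 0 := by
    intro μ
    by_cases hi : i ∈ μ <;> by_cases hj : j ∈ μ <;> simp [creationMatrix, hi, hj, pow_add]
    ring
  simp only [Matrix.add_apply, Matrix.mul_apply, Matrix.conjTranspose_apply, hA, hW]
  rw [sum_ite_pair_mem_eq_sum_ite_notMem_insert_insert, ← sum_add_distrib]
  refine sum_eq_zero fun ρ _ => ?_
  split_ifs with h
  · have hi : i ∉ insert j ρ := by simp [hij, h.1]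
    rw [posIn_insert_insert_add hij h.1 h.2, erase_insert hi, erase_insert_of_ne hij,
      erase_insert h.2]
    ring
  · simp

theorem conjTranspose_annihilationMatrix_mul_self_add_creationMatrix :
    (annihilationMatrix c)ᴴ * annihilationMatrix c + (creationMatrix c)ᴴ * creationMatrix c =
      ((∑ s, ‖c s‖ ^ 2 : ℝ) : ℂ) • 1 := by
  ext i j
  rcases eq_or_ne i j with rfl | hij
  · rw [Matrix.add_apply, conjTranspose_annihilationMatrix_mul_self_apply_self,
      conjTranspose_creationMatrix_mul_self_apply_self, ← ofReal_add, ← sum_add_distrib]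
    simp only [ite_not, ite_add_ite, add_zero, zero_add, ite_self]
    simp
  · rw [conjTranspose_annihilationMatrix_mul_self_add_creationMatrix_apply_of_ne c hij,
      Matrix.smul_apply, Matrix.one_apply_ne hij, smul_zero]

end FockMatrices

section GammaM

variable {N K : ℕ}

def extendCoeff {R : Type*} [Zero R] (C : SigmaNK N K → R) (s : Finset (Fin K)) : R :=
  if h : s.card = N then C ⟨s, h⟩ else 0

@[simp]
theorem extendCoeff_val {R : Type*} [Zero R] (C : SigmaNK N K → R) (σ : SigmaNK N K) :
    extendCoeff C σ.1 = C σ :=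
  dif_pos σ.2

theorem extendCoeff_of_card_ne {R : Type*} [Zero R] (C : SigmaNK N K → R) {s : Finset (Fin K)}
    (hs : s.card ≠ N) : extendCoeff C s = 0 :=
  dif_neg hs

theorem sum_sigmaNK_eq_sum {M : Type*} [AddCommMonoid M] {f : SigmaNK N K → M}
    {g : Finset (Fin K) → M} (hg : ∀ s : Finset (Fin K), s.card ≠ N → g s = 0)
    (hfg : ∀ σ, f σ = g σ.1) : ∑ σ, f σ = ∑ s, g s :=
  Fintype.sum_of_injective Subtype.val Subtype.val_injective f g
    (fun s hs => hg s fun h => hs ⟨⟨s, h⟩, rfl⟩) hfg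

theorem gamma1_eq_sum_annihilationMatrix (C : SigmaNK N K → ℂ) (i j : Fin K) :
    gamma1 N K C i j = ∑ ρ, annihilationMatrix (extendCoeff C) ρ i *
      conj (annihilationMatrix (extendCoeff C) ρ j) := by
  set c := extendCoeff C
  calc gamma1 N K C i j
      = ∑ s, ∑ t, if i ∈ s ∧ j ∈ t ∧ s.erase i = t.erase j then
          (-1 : ℂ) ^ (posIn s i + posIn t j) * c s * conj (c t) else 0 := by
        refine sum_sigmaNK_eq_sum (fun s hs => ?_)
          (fun σ => sum_sigmaNK_eq_sum (fun t ht => ?_) (fun τ => ?_))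
        · simp [c, extendCoeff_of_card_ne C hs]
        · simp [c, extendCoeff_of_card_ne C ht]
        · simp [c]
    _ = ∑ ρ, if i ∉ ρ ∧ j ∉ ρ then (-1 : ℂ) ^ (posIn (insert i ρ) i + posIn (insert j ρ) j) *
          c (insert i ρ) * conj (c (insert j ρ)) else 0 :=
        sum_sum_ite_erase_eq_erase i j _
    _ = _ := by
        refine sum_congr rfl fun ρ _ => ?_
        by_cases hi : i ∈ ρ
        · simp [annihilationMatrix, hi]
        by_cases hj : j ∈ ρ
        · simp [annihilationMatrix, hi, hj]
        simp only [annihilationMatrix, Matrix.of_apply, hi, hj, not_false_eq_true, and_self,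
          if_true, pow_add, map_mul, map_pow, map_neg, map_one]
        ring

theorem gammaM_eq_conjTranspose_mul_self (C : SigmaNK N K → ℂ) :
    GammaM N K C =
      (annihilationMatrix (extendCoeff C))ᴴ * annihilationMatrix (extendCoeff C) := by
  ext i j
  simp [GammaM, gamma1_eq_sum_annihilationMatrix, Matrix.mul_apply]

theorem gammaM_apply_self (C : SigmaNK N K → ℂ) (i : Fin K) :
    GammaM N K C i i = ((∑ σ : SigmaNK N K, if i ∈ σ.1 then ‖C σ‖ ^ 2 else 0 : ℝ) : ℂ) := by
  rw [gammaM_eq_conjTranspose_mul_self, conjTranspose_annihilationMatrix_mul_self_apply_self]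
  congr 1
  exact (sum_sigmaNK_eq_sum (fun s hs => by simp [extendCoeff_of_card_ne C hs])
    fun σ => by simp).symm

theorem trace_gammaM (C : SigmaNK N K → ℂ) :
    (GammaM N K C).trace = ((N * ∑ σ : SigmaNK N K, ‖C σ‖ ^ 2 : ℝ) : ℂ) := by
  simp only [Matrix.trace, Matrix.diag, gammaM_apply_self, ← ofReal_sum]
  rw [sum_comm, mul_sum]
  congr 1
  refine sum_congr rfl fun σ _ => ?_
  rw [sum_ite_mem, univ_inter, sum_const, σ.2, nsmul_eq_mul]

theorem one_sub_gammaM_eq_conjTranspose_mul_self (C : SigmaNK N K → ℂ)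
    (hC : ∑ σ : SigmaNK N K, ‖C σ‖ ^ 2 = 1) :
    1 - GammaM N K C = (creationMatrix (extendCoeff C))ᴴ * creationMatrix (extendCoeff C) := by
  have hnorm : ∑ s, ‖extendCoeff C s‖ ^ 2 = 1 :=
    (sum_sigmaNK_eq_sum (fun s hs => by simp [extendCoeff_of_card_ne C hs])
      fun σ => by simp).symm.trans hC
  have hcar := conjTranspose_annihilationMatrix_mul_self_add_creationMatrix (extendCoeff C)
  rw [hnorm, ofReal_one, one_smul] at hcar
  rw [gammaM_eq_conjTranspose_mul_self, ← hcar, add_sub_cancel_left]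

end GammaM

theorem GammaM_properties_general (N K : ℕ)
    (C : SigmaNK N K → ℂ) (hC : ∑ σ : SigmaNK N K, ‖C σ‖ ^ 2 = 1) :
    (GammaM N K C).IsHermitian ∧
    (∀ i : Fin K,
      GammaM N K C i i =
        ((∑ σ : SigmaNK N K, if i ∈ σ.1 then ‖C σ‖ ^ 2 else 0 : ℝ) : ℂ)) ∧
    (∀ i : Fin K,
      0 ≤ (GammaM N K C i i).re ∧ (GammaM N K C i i).re ≤ 1 ∧ (GammaM N K C i i).im = 0) ∧
    Matrix.trace (GammaM N K C) = (N : ℂ) ∧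
    (GammaM N K C).PosSemidef ∧
    ((1 : Matrix (Fin K) (Fin K) ℂ) - GammaM N K C).PosSemidef := by
  have hpsd : (GammaM N K C).PosSemidef :=
    gammaM_eq_conjTranspose_mul_self C ▸ Matrix.posSemidef_conjTranspose_mul_self _
  refine ⟨hpsd.isHermitian, gammaM_apply_self C, fun i => ?_, ?_, hpsd, ?_⟩
  · rw [gammaM_apply_self, ofReal_re, ofReal_im]
    refine ⟨sum_nonneg fun σ _ => by positivity, ?_, rfl⟩
    calc (∑ σ : SigmaNK N K, if i ∈ σ.1 then ‖C σ‖ ^ 2 else 0)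
        ≤ ∑ σ : SigmaNK N K, ‖C σ‖ ^ 2 := sum_le_sum fun σ _ => by split_ifs <;> simp
      _ = 1 := hC
  · rw [trace_gammaM, hC, mul_one, ofReal_natCast]
  · rw [one_sub_gammaM_eq_conjTranspose_mul_self C hC]
    exact Matrix.posSemidef_conjTranspose_mul_self _

/-- for normalized C, the matrix Γ(C) is Hermitian, its diagonal entries
are Γ(C)_ii = Σ_{σ ∋ i} |c_σ|² ∈ [0,1], its trace is N, and both Γ(C) and I − Γ(C)
are positive semidefinite. -/
theorem GammaM_properties (N K : ℕ) (hN : 1 ≤ N) (hNK : N ≤ K)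
    (C : SigmaNK N K → ℂ) (hC : ∑ σ : SigmaNK N K, ‖C σ‖ ^ 2 = 1) :
    (GammaM N K C).IsHermitian ∧
    (∀ i : Fin K,
      GammaM N K C i i =
        ((∑ σ : SigmaNK N K, if i ∈ σ.1 then ‖C σ‖ ^ 2 else 0 : ℝ) : ℂ)) ∧
    (∀ i : Fin K,
      0 ≤ (GammaM N K C i i).re ∧ (GammaM N K C i i).re ≤ 1 ∧ (GammaM N K C i i).im = 0) ∧
    Matrix.trace (GammaM N K C) = (N : ℂ) ∧
    (GammaM N K C).PosSemidef ∧
    ((1 : Matrix (Fin K) (Fin K) ℂ) - GammaM N K C).PosSemidef :=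
  GammaM_properties_general N K C hC
end
end

section
/- Assume N ≥ 2. For every C ∈ ℂ^r and all 1 ≤ i,j ≤ K: γ_ij(C) = (2/(N−1)) Σ_{k=1}^K γ_ikjk(C). -/
open MeasureTheory Complex
open scoped BigOperators ComplexConjugate ENNReal

noncomputable section

/-!
Exchanging the sums, the `k`-th term of `∑ₖ γ_ikjk` collects the pairs `(σ, τ)` with
`σ ∖ {i, k} = τ ∖ {j, k}`. It vanishes for `k ∈ {i, j}`, and otherwise forces `σ ∖ {i} = τ ∖ {j} =: S`
with `k ∈ S`. Moving `i` past the elements of `S` below `k` shows that the two-index sign of `(i, k)`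
in `σ` is `(-1) ^ (pos_σ i + pos_S k)`, so the product of the two signs is the sign in `γ_ij`,
independently of `k`. Each pair `(σ, τ)` of `γ_ij` is therefore counted `|S| = N - 1` times.
-/

theorem List.idxOf_eq_countP_lt {α : Type*} [LinearOrder α] {l : List α}
    (hl : l.Pairwise (· < ·)) {a : α} (ha : a ∈ l) :
    l.idxOf a = l.countP (· < a) := by
  induction l with
  | nil => simp at ha
  | cons b t ih =>
    have hbt : ∀ x ∈ t, b < x := fun x hx => List.rel_of_pairwise_cons hl hx
    rcases List.mem_cons.mp ha with rfl | hat
    · have : t.countP (· < a) = 0 :=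
        List.countP_eq_zero.mpr fun x hx => by simpa using (hbt x hx).le
      simp [this]
    · have hba := hbt a hat
      rw [List.idxOf_cons_ne _ hba.ne, List.countP_cons, ih hl.of_cons hat]
      simp [hba]

theorem erase_erase_eq_iff {α : Type*} [DecidableEq α] {s t : Finset α} {i j k : α}
    (hki : k ≠ i) (hkj : k ≠ j) :
    (i ∈ s ∧ k ∈ s ∧ j ∈ t ∧ k ∈ t ∧ (s.erase i).erase k = (t.erase j).erase k) ↔
      (i ∈ s ∧ j ∈ t ∧ s.erase i = t.erase j) ∧ k ∈ s.erase i := by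
  constructor
  · rintro ⟨hi, hks, hj, hkt, h⟩
    have hks' : k ∈ s.erase i := Finset.mem_erase.mpr ⟨hki, hks⟩
    have hkt' : k ∈ t.erase j := Finset.mem_erase.mpr ⟨hkj, hkt⟩
    exact ⟨⟨hi, hj, Finset.erase_injOn' k hks' hkt' h⟩, hks'⟩
  · rintro ⟨⟨hi, hj, h⟩, hk⟩
    exact ⟨hi, Finset.mem_of_mem_erase hk, hj, Finset.mem_of_mem_erase (h ▸ hk), by rw [h]⟩

theorem posIn_eq_card_filter_lt_s7 {K : ℕ} {s : Finset (Fin K)} {i : Fin K} (hi : i ∈ s) :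
    posIn s i = (s.filter (· < i)).card := by
  rw [posIn, List.idxOf_eq_countP_lt (Finset.sortedLT_sort s).pairwise (by simpa using hi),
    (Finset.sort_perm_toList s (· ≤ ·)).countP_eq, ← Multiset.coe_countP, Finset.coe_toList,
    Multiset.countP_eq_card_filter]
  rfl

theorem posIn_eq_posIn_erase_add {K : ℕ} {s : Finset (Fin K)} {i k : Fin K} (hi : i ∈ s)
    (hk : k ∈ s.erase i) :
    posIn s k = posIn (s.erase i) k + if i < k then 1 else 0 := by
  rw [posIn_eq_card_filter_lt_s7 (Finset.mem_of_mem_erase hk), posIn_eq_card_filter_lt_s7 hk,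
    Finset.filter_erase]
  split_ifs with hik
  · have hmem : i ∈ s.filter (· < k) := Finset.mem_filter.mpr ⟨hi, hik⟩
    rw [Finset.card_erase_of_mem hmem]
    have hpos := Finset.card_pos.mpr ⟨i, hmem⟩
    omega
  · rw [Finset.erase_eq_of_notMem (by simp [hik])]
    rfl

theorem sgn2_eq_of_mem_erase {K : ℕ} {s : Finset (Fin K)} {i k : Fin K} (hi : i ∈ s)
    (hk : k ∈ s.erase i) :
    sgn2 s i k = (-1) ^ (posIn s i + posIn (s.erase i) k) := by
  have hki : k ≠ i := Finset.ne_of_mem_erase hk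
  rw [sgn2, posIn_eq_posIn_erase_add hi hk, if_neg hki.symm]
  rcases hki.lt_or_gt with h | h
  · simp [h, h.not_gt]
  · simp [h, h.not_gt, ← add_assoc, pow_succ]

theorem sgn2_mul_sgn2_of_erase_eq {K : ℕ} {s t : Finset (Fin K)} {i j k : Fin K} (hi : i ∈ s)
    (hj : j ∈ t) (hst : s.erase i = t.erase j) (hk : k ∈ s.erase i) :
    sgn2 s i k * sgn2 t j k = (-1) ^ (posIn s i + posIn t j) := by
  rw [sgn2_eq_of_mem_erase hi hk, sgn2_eq_of_mem_erase hj (hst ▸ hk), ← hst, ← pow_add,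
    neg_one_pow_eq_pow_mod_two, neg_one_pow_eq_pow_mod_two (n := posIn s i + posIn t j)]
  congr 1
  omega

theorem gamma2_summand_eq {K : ℕ} (s t : Finset (Fin K)) (i j k : Fin K) (a b : ℂ) :
    (if i ∈ s ∧ k ∈ s ∧ j ∈ t ∧ k ∈ t ∧ (s.erase i).erase k = (t.erase j).erase k then
      sgn2 s i k * sgn2 t j k * a * b else 0) =
    if (i ∈ s ∧ j ∈ t ∧ s.erase i = t.erase j) ∧ k ∈ s.erase i then
      (-1) ^ (posIn s i + posIn t j) * a * b else 0 := by
  by_cases hki : k = i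
  · subst hki
    simp [sgn2]
  by_cases hkj : k = j
  · subst hkj
    have hk : ¬((i ∈ s ∧ k ∈ t ∧ s.erase i = t.erase k) ∧ k ∈ s.erase i) := by
      rintro ⟨⟨-, -, h⟩, hk⟩
      simp [h] at hk
    rw [if_neg hk]
    simp [sgn2]
  by_cases h : (i ∈ s ∧ j ∈ t ∧ s.erase i = t.erase j) ∧ k ∈ s.erase i
  · obtain ⟨⟨hi, hj, hst⟩, hk⟩ := h
    rw [if_pos ((erase_erase_eq_iff hki hkj).2 ⟨⟨hi, hj, hst⟩, hk⟩), if_pos ⟨⟨hi, hj, hst⟩, hk⟩,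
      sgn2_mul_sgn2_of_erase_eq hi hj hst hk]
  · rw [if_neg (mt (erase_erase_eq_iff hki hkj).1 h), if_neg h]

theorem sum_gamma2_summand {K : ℕ} (s t : Finset (Fin K)) (i j : Fin K) (a b : ℂ) :
    (∑ k, if i ∈ s ∧ k ∈ s ∧ j ∈ t ∧ k ∈ t ∧ (s.erase i).erase k = (t.erase j).erase k then
      sgn2 s i k * sgn2 t j k * a * b else 0) =
    ((s.card : ℂ) - 1) * if i ∈ s ∧ j ∈ t ∧ s.erase i = t.erase j then
      (-1) ^ (posIn s i + posIn t j) * a * b else 0 := by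
  simp_rw [gamma2_summand_eq]
  by_cases h : i ∈ s ∧ j ∈ t ∧ s.erase i = t.erase j
  · simp only [h, true_and, if_true]
    rw [Finset.sum_ite_mem, Finset.univ_inter, Finset.sum_const, nsmul_eq_mul, ← h.2.2,
      Finset.card_erase_of_mem h.1, Nat.cast_sub (Finset.card_pos.mpr ⟨i, h.1⟩), Nat.cast_one]
  · simp [h]

theorem sum_gamma2_eq (N K : ℕ) (C : SigmaNK N K → ℂ) (i j : Fin K) :
    ∑ k, gamma2 N K C i k j k = ((N : ℂ) - 1) / 2 * gamma1 N K C i j := by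
  simp only [gamma2, gamma1, ← Finset.mul_sum]
  rw [Finset.sum_comm, Finset.sum_congr rfl fun σ _ => Finset.sum_comm]
  have hcard (σ : SigmaNK N K) : (σ.1.card : ℂ) = N := congrArg Nat.cast σ.2
  simp only [sum_gamma2_summand, hcard, ← Finset.mul_sum]
  ring

theorem gamma1_eq_sum_gamma2_general (N K : ℕ) (hN : 2 ≤ N)
    (C : SigmaNK N K → ℂ) (i j : Fin K) :
    gamma1 N K C i j = (2 / ((N : ℂ) - 1)) * ∑ k : Fin K, gamma2 N K C i k j k := by
  have hN1 : (N : ℂ) - 1 ≠ 0 := sub_ne_zero.mpr (by exact_mod_cast (by omega : N ≠ 1))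
  rw [sum_gamma2_eq]
  field_simp

/-- for N ≥ 2 and any C ∈ ℂ^r, γ_ij(C) = (2/(N−1)) Σ_k γ_ikjk(C). -/
theorem gamma1_eq_sum_gamma2 (N K : ℕ) (hN : 2 ≤ N) (hNK : N ≤ K)
    (C : SigmaNK N K → ℂ) (i j : Fin K) :
    gamma1 N K C i j = (2 / ((N : ℂ) - 1)) * ∑ k : Fin K, gamma2 N K C i k j k :=
  gamma1_eq_sum_gamma2_general N K hN C i j
end
end
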